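/- Let T_R be a Euclidean minimum spanning tree of R ∪ P and T_B a Euclidean minimum spanning tree of B ∪ P, and assume R ∪ P and B ∪ P are nonempty. Then the graph G whose edge set is the union of the edge sets of T_R and T_B is a red-blue-purple spanning graph of (R,B,P), and its weight is at most twice the weight of a minimum red-blue-purple spanning graph of (R,B,P). -/

import Mathlib

open scoped Classical

noncomputable section

/-- The Euclidean plane. -/
abbrev Pt : Type := EuclideanSpace ℝ (Fin 2)

/-- The simple graph on the plane whose edge set is the finite set `E`. -/
def graphOf (E : Finset (Sym2 Pt)) : SimpleGraph Pt where
  Adj x y := x ≠ y ∧ s(x, y) ∈ E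
  symm := ⟨fun x y ⟨hne, he⟩ => ⟨hne.symm, by rwa [Sym2.eq_swap]⟩⟩
  loopless := ⟨fun x ⟨hne, _⟩ => hne rfl⟩

/-- Euclidean length of an edge. -/
def edgeLen (e : Sym2 Pt) : ℝ :=
  Sym2.lift ⟨fun x y => dist x y, fun _ _ => dist_comm _ _⟩ e

/-- Total Euclidean length of a finite edge set. -/
def weight (E : Finset (Sym2 Pt)) : ℝ := ∑ e ∈ E, edgeLen e

/-- `E` is the edge set of a red-blue-purple spanning graph of `(R, B, P)`. -/
def IsRBP (R B P : Finset Pt) (E : Finset (Sym2 Pt)) : Prop :=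
  (∀ e ∈ E, ¬ e.IsDiag) ∧
  (∀ e ∈ E, ∀ x ∈ e, x ∈ R ∪ B ∪ P) ∧
  ((graphOf E).induce (↑(R ∪ P) : Set Pt)).Connected ∧
  ((graphOf E).induce (↑(B ∪ P) : Set Pt)).Connected

/-- `E` is the edge set of a minimum red-blue-purple spanning graph of `(R, B, P)`. -/
def IsMinRBP (R B P : Finset Pt) (E : Finset (Sym2 Pt)) : Prop :=
  IsRBP R B P E ∧ ∀ E', IsRBP R B P E' → weight E ≤ weight E'

/-- `T` is the edge set of a spanning tree on the point set `Q`. -/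
def IsSpanningTreeOn (Q : Finset Pt) (T : Finset (Sym2 Pt)) : Prop :=
  (∀ e ∈ T, ¬ e.IsDiag) ∧
  (∀ e ∈ T, ∀ x ∈ e, x ∈ Q) ∧
  ((graphOf T).induce (↑Q : Set Pt)).IsTree

/-- `T` is the edge set of a Euclidean minimum spanning tree of `Q`. -/
def IsEMST (Q : Finset Pt) (T : Finset (Sym2 Pt)) : Prop :=
  IsSpanningTreeOn Q T ∧ ∀ T', IsSpanningTreeOn Q T' → weight T ≤ weight T'

/-!
Every RBP spanning graph `E` connects `R ∪ P` and `B ∪ P`, so it contains a spanning tree of each;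
hence each Euclidean MST weighs at most `weight E`, and their union at most `2 * weight E`.
-/

open SimpleGraph

lemma graphOf_eq_fromEdgeSet (E : Finset (Sym2 Pt)) : graphOf E = fromEdgeSet ↑E := by
  ext x y
  simp [graphOf, and_comm]

lemma graphOf_mono {E F : Finset (Sym2 Pt)} (h : E ⊆ F) : graphOf E ≤ graphOf F :=
  fun _ _ hxy => ⟨hxy.1, h hxy.2⟩

lemma edgeSet_graphOf_subset (E : Finset (Sym2 Pt)) : (graphOf E).edgeSet ⊆ ↑E := by
  rw [graphOf_eq_fromEdgeSet, edgeSet_fromEdgeSet]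
  exact Set.sdiff_subset

lemma graphOf_toFinset_edgeSet (G : SimpleGraph Pt) (hG : G.edgeSet.Finite) :
    graphOf hG.toFinset = G := by
  rw [graphOf_eq_fromEdgeSet, Set.Finite.coe_toFinset, fromEdgeSet_edgeSet]

lemma edgeLen_nonneg (e : Sym2 Pt) : 0 ≤ edgeLen e := by
  induction e using Sym2.ind with
  | _ x y => exact dist_nonneg (x := x) (y := y)

lemma weight_mono {E F : Finset (Sym2 Pt)} (h : E ⊆ F) : weight E ≤ weight F :=
  Finset.sum_le_sum_of_subset_of_nonneg h fun e _ _ => edgeLen_nonneg e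

lemma weight_union_le (E F : Finset (Sym2 Pt)) : weight (E ∪ F) ≤ weight E + weight F := by
  have hinter : 0 ≤ weight (E ∩ F) := Finset.sum_nonneg fun e _ => edgeLen_nonneg e
  have := Finset.sum_union_inter (s₁ := E) (s₂ := F) (f := edgeLen)
  unfold weight at *
  linarith

lemma exists_isSpanningTreeOn_subset {Q : Finset Pt} {E : Finset (Sym2 Pt)}
    (hconn : ((graphOf E).induce (↑Q : Set Pt)).Connected) :
    ∃ T ⊆ E, IsSpanningTreeOn Q T := by
  obtain ⟨T, hle, hT⟩ := hconn.exists_isTree_le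
  have hfin : T.spanningCoe.edgeSet.Finite := by
    rw [edgeSet_map]
    exact (Set.toFinite _).image _
  refine ⟨hfin.toFinset, fun e he => ?_, fun e he => ?_, fun e he x hx => ?_, ?_⟩
  · have hsub : T.spanningCoe ≤ graphOf E := (map_le_iff_le_comap _ _ _).2 hle
    exact edgeSet_graphOf_subset E (edgeSet_mono hsub (hfin.mem_toFinset.1 he))
  · exact not_isDiag_of_mem_edgeSet _ (hfin.mem_toFinset.1 he)
  · rw [hfin.mem_toFinset, edgeSet_map] at he
    obtain ⟨e', -, rfl⟩ := he
    obtain ⟨x', -, rfl⟩ := Sym2.mem_map.1 hx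
    exact x'.2
  · rwa [graphOf_toFinset_edgeSet, induce_spanningCoe]

lemma IsEMST.weight_le_of_connected {Q : Finset Pt} {T E : Finset (Sym2 Pt)} (hT : IsEMST Q T)
    (hconn : ((graphOf E).induce (↑Q : Set Pt)).Connected) : weight T ≤ weight E := by
  obtain ⟨T', hT'E, hT'⟩ := exists_isSpanningTreeOn_subset hconn
  exact (hT.2 T' hT').trans (weight_mono hT'E)

lemma IsSpanningTreeOn.connected_induce_union {Q : Finset Pt} {T : Finset (Sym2 Pt)}
    (hT : IsSpanningTreeOn Q T) (F : Finset (Sym2 Pt)) :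
    ((graphOf (T ∪ F)).induce (↑Q : Set Pt)).Connected :=
  hT.2.2.connected.mono fun _ _ hxy => graphOf_mono Finset.subset_union_left hxy

lemma isRBP_union {R B P : Finset Pt} {TR TB : Finset (Sym2 Pt)}
    (hTR : IsSpanningTreeOn (R ∪ P) TR) (hTB : IsSpanningTreeOn (B ∪ P) TB) :
    IsRBP R B P (TR ∪ TB) := by
  refine ⟨fun e he => ?_, fun e he x hx => ?_, hTR.connected_induce_union TB, ?_⟩
  · rcases Finset.mem_union.1 he with h | h
    exacts [hTR.1 e h, hTB.1 e h]
  · rcases Finset.mem_union.1 he with h | h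
    · exact Finset.union_subset_union Finset.subset_union_left subset_rfl (hTR.2.1 e h x hx)
    · exact Finset.union_subset_union Finset.subset_union_right subset_rfl (hTB.2.1 e h x hx)
  · rw [Finset.union_comm TR TB]
    exact hTB.connected_induce_union TR

theorem union_of_MSTs_is_two_approximation_general (R B P : Finset Pt)
    (TR TB : Finset (Sym2 Pt))
    (hTR : IsEMST (R ∪ P) TR) (hTB : IsEMST (B ∪ P) TB) :
    IsRBP R B P (TR ∪ TB) ∧
    ∀ E : Finset (Sym2 Pt), IsMinRBP R B P E →
      weight (TR ∪ TB) ≤ 2 * weight E := by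
  refine ⟨isRBP_union hTR.1 hTB.1, fun E hE => ?_⟩
  obtain ⟨⟨-, -, hconnR, hconnB⟩, -⟩ := hE
  calc weight (TR ∪ TB) ≤ weight TR + weight TB := weight_union_le TR TB
    _ ≤ weight E + weight E :=
      add_le_add (hTR.weight_le_of_connected hconnR) (hTB.weight_le_of_connected hconnB)
    _ = 2 * weight E := by ring

/-- the union of a Euclidean MST of `R ∪ P` and a Euclidean MST of
`B ∪ P` is an RBP spanning graph of `(R, B, P)` whose weight is at most twice the
weight of a minimum RBP spanning graph. -/
theorem union_of_MSTs_is_two_approximation (R B P : Finset Pt)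
    (hRB : Disjoint R B) (hRP : Disjoint R P) (hBP : Disjoint B P)
    (hRPne : (R ∪ P).Nonempty) (hBPne : (B ∪ P).Nonempty)
    (TR TB : Finset (Sym2 Pt))
    (hTR : IsEMST (R ∪ P) TR) (hTB : IsEMST (B ∪ P) TB) :
    IsRBP R B P (TR ∪ TB) ∧
    ∀ E : Finset (Sym2 Pt), IsMinRBP R B P E →
      weight (TR ∪ TB) ≤ 2 * weight E :=
  union_of_MSTs_is_two_approximation_general R B P TR TB hTR hTB
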